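/- For any vertex-weighted graph (G, w), X_{(G,w)} = Σ_{A ⊆ E(G)} (−1)^{|A|} p_{π(G,w,A)}, where π(G,w,A) is the partition of w(V(G)) whose parts are the total weights of the vertex sets of the components of (V(G), A). -/

import Mathlib

open SimpleGraph

/-- Proper coloring for an edge set over `Sym2 V` (loops allowed): adjacent (or equal, for a
loop) endpoints must receive different colors. -/
def ProperCol {V : Type*} (E : Set (Sym2 V)) (k : V -> Nat) : Prop :=
  forall u v : V, s(u, v) ∈ E -> k u ≠ k v

/-- Weighted chromatic symmetric function `X_{(G,w)}` as a formal power series in the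
variables `x_0, x_1, …` : the coefficient of a monomial `d` is the number of proper
colorings whose total weight in color `i` is `d i` for every `i`. -/
noncomputable def csfW {V : Type*} (E : Set (Sym2 V)) (w : V -> Nat) : MvPowerSeries Nat Int :=
  fun d => (Nat.card {k : V -> Nat |
    ProperCol E k ∧ forall i : Nat, (∑ᶠ v ∈ {v : V | k v = i}, w v) = d i} : Int)

/-- Chromatic symmetric function `X_G` of a simple graph. -/
noncomputable def csf {V : Type*} (G : SimpleGraph V) : MvPowerSeries Nat Int :=
  csfW G.edgeSet (fun _ => 1)

/-- The power-sum symmetric function `p_k = Σ_i x_i ^ k`. -/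
noncomputable def psum (k : Nat) : MvPowerSeries Nat Int :=
  open scoped Classical in
  fun d => if ∃ i : Nat, d = Finsupp.single i k then 1 else 0

/-- `p_lam` for a multiset of parts `lam`. -/
noncomputable def pProd (m : Multiset Nat) : MvPowerSeries Nat Int :=
  (m.map psum).prod

/-- The multiset of the total `w`-weights of the vertex sets of the connected components
of `G`; with `w = 1` this is the partition `π(A)` of the orders of the components. -/
noncomputable def piW {V : Type*} [Finite V] (G : SimpleGraph V) (w : V -> Nat) : Multiset Nat :=
  letI : Fintype G.ConnectedComponent := Fintype.ofFinite _
  (Finset.univ : Finset G.ConnectedComponent).val.map fun c => ∑ᶠ v ∈ c.supp, w v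

/-! The coefficient of a monomial `x^d` on either side counts colorings `k` whose weight
profile `i ↦ w(k⁻¹(i))` is `d`: on the left the proper ones, and in the term of `A` those constant
on the components of `(V, A)`, since expanding `∏_C p_{w(C)}` picks one color per component.
Exchanging the two sums, a coloring contributes `∑_{A ⊆ M} (-1)^|A|`, where `M` is its set of
monochromatic edges of `E`; this is `1` if `M = ∅`, i.e. if the coloring is proper, and `0`
otherwise. -/

open Finset

section ColorProfile

variable {ι : Type*} [Fintype ι]

noncomputable def colorProfile (w k : ι → ℕ) : ℕ →₀ ℕ :=
  ∑ v, Finsupp.single (k v) (w v)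

theorem colorProfile_apply [DecidableEq ι] (w k : ι → ℕ) (i : ℕ) :
    colorProfile w k i = ∑ v with k v = i, w v := by
  rw [colorProfile, Finsupp.finsetSum_apply, Finset.sum_filter]
  exact Finset.sum_congr rfl fun v _ => by rw [Finsupp.single_apply]

theorem finsum_mem_colorClass (w k : ι → ℕ) (i : ℕ) :
    ∑ᶠ v ∈ {v | k v = i}, w v = colorProfile w k i := by
  classical
  rw [colorProfile_apply, ← finsum_mem_coe_finset, coe_filter]
  simp only [Finset.mem_univ, true_and]

theorem mem_support_of_colorProfile_eq {w k : ι → ℕ} (hw : ∀ v, 0 < w v) {d : ℕ →₀ ℕ}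
    (h : colorProfile w k = d) (v : ι) : k v ∈ d.support := by
  classical
  rw [Finsupp.mem_support_iff, ← h, colorProfile_apply]
  exact (Finset.sum_pos' (fun _ _ => Nat.zero_le _) ⟨v, by simp, hw v⟩).ne'

-- Restricting the colors to `d.support` loses nothing for positive weights
-- (`coe_profileColorings`) and makes the set finite.
open scoped Classical in
noncomputable def profileColorings (w : ι → ℕ) (d : ℕ →₀ ℕ) : Finset (ι → ℕ) :=
  {k ∈ Fintype.piFinset fun _ => d.support | colorProfile w k = d}

theorem coe_profileColorings {w : ι → ℕ} (hw : ∀ v, 0 < w v) (d : ℕ →₀ ℕ) :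
    (profileColorings w d : Set (ι → ℕ)) = {k | colorProfile w k = d} := by
  ext k
  simp only [profileColorings, coe_filter, Fintype.mem_piFinset, Set.mem_ofPred_eq,
    and_iff_right_iff_imp]
  exact mem_support_of_colorProfile_eq hw

theorem coeff_csfW {V : Type*} [Fintype V] (E : Set (Sym2 V)) {w : V → ℕ} (hw : ∀ v, 0 < w v)
    (d : ℕ →₀ ℕ) [DecidablePred (ProperCol E)] :
    MvPowerSeries.coeff d (csfW E w) = #{k ∈ profileColorings w d | ProperCol E k} := by
  have hset : {k : V → ℕ | ProperCol E k ∧ ∀ i, ∑ᶠ v ∈ {v | k v = i}, w v = d i} =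
      ↑{k ∈ profileColorings w d | ProperCol E k} := by
    ext k
    rw [coe_filter, Set.mem_ofPred_eq, Set.mem_ofPred_eq, ← Finset.mem_coe,
      coe_profileColorings hw, Set.mem_ofPred_eq, and_comm, Finsupp.ext_iff]
    simp only [finsum_mem_colorClass]
  change (Nat.card _ : ℤ) = _
  rw [hset, Nat.card_coe_set_eq, Set.ncard_coe_finset]

end ColorProfile

section PowerSums

variable {ι : Type*} [Fintype ι]

open scoped Classical in
theorem coeff_psum (n : ℕ) (d : ℕ →₀ ℕ) :
    MvPowerSeries.coeff d (psum n) = if ∃ i, d = Finsupp.single i n then 1 else 0 :=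
  rfl

theorem coeff_prod_psum {f : ι → ℕ} (hf : ∀ i, 0 < f i) (d : ℕ →₀ ℕ) :
    MvPowerSeries.coeff d (∏ i, psum (f i)) = #(profileColorings f d) := by
  classical
  rw [MvPowerSeries.coeff_prod]
  simp only [coeff_psum, prod_boole, mem_univ, forall_const, sum_boole, Nat.cast_inj]
  symm
  refine card_bij
    (fun k _ => Finsupp.equivFunOnFinite.symm fun i => Finsupp.single (k i) (f i)) ?_ ?_ ?_
  · intro k hk
    rw [← Finset.mem_coe, coe_profileColorings hf] at hk
    simp only [Finset.mem_filter, Finset.mem_finsuppAntidiag, Finsupp.coe_equivFunOnFinite_symm]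
    exact ⟨⟨hk, fun i _ => Finset.mem_univ i⟩, fun i => ⟨k i, rfl⟩⟩
  · intro k _ k' _ h
    funext i
    exact (Finsupp.single_left_inj (hf i).ne').mp (DFunLike.congr_fun h i)
  · intro l hl
    simp only [Finset.mem_filter, Finset.mem_finsuppAntidiag] at hl
    obtain ⟨⟨hsum, -⟩, hsingle⟩ := hl
    choose k hk using hsingle
    refine ⟨k, ?_, ?_⟩
    · rw [← Finset.mem_coe, coe_profileColorings hf, Set.mem_ofPred_eq, ← hsum, colorProfile]
      exact Finset.sum_congr rfl fun i _ => (hk i).symm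
    · ext1 i
      exact (hk i).symm

end PowerSums

namespace SimpleGraph

variable {V : Type*} [Fintype V] (G : SimpleGraph V)

theorem pProd_piW [Fintype G.ConnectedComponent] (w : V → ℕ) :
    pProd (piW G w) = ∏ c : G.ConnectedComponent, psum (∑ᶠ v ∈ c.supp, w v) := by
  rw [piW, pProd, Multiset.map_map, Finset.prod_eq_multiset_prod]
  congr!

theorem finsum_mem_supp_pos {w : V → ℕ} (hw : ∀ v, 0 < w v) (c : G.ConnectedComponent) :
    0 < ∑ᶠ v ∈ c.supp, w v := by
  obtain ⟨v, rfl⟩ := c.exists_rep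
  exact finsum_cond_pos (fun u _ => (hw u).le)
    ⟨v, ConnectedComponent.connectedComponentMk_mem, hw v⟩ (Set.toFinite _)

open scoped Classical in
theorem finsum_mem_supp_eq_sum (w : V → ℕ) (c : G.ConnectedComponent) :
    ∑ᶠ v ∈ c.supp, w v = ∑ v with G.connectedComponentMk v = c, w v := by
  rw [← finsum_mem_coe_finset, coe_filter]
  simp only [Finset.mem_univ, true_and]
  rfl

theorem colorProfile_comp_connectedComponentMk [Fintype G.ConnectedComponent] (w : V → ℕ)
    (κ : G.ConnectedComponent → ℕ) :
    colorProfile w (κ ∘ G.connectedComponentMk) =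
      colorProfile (fun c : G.ConnectedComponent => ∑ᶠ v ∈ c.supp, w v) κ := by
  classical
  rw [colorProfile, ← Finset.sum_fiberwise univ G.connectedComponentMk, colorProfile]
  refine Finset.sum_congr rfl fun c _ => ?_
  rw [finsum_mem_supp_eq_sum, Finsupp.single_finsetSum]
  exact Finset.sum_congr rfl fun v hv => by rw [Function.comp_apply, (Finset.mem_filter.mp hv).2]

open scoped Classical in
theorem coeff_pProd_piW {w : V → ℕ} (hw : ∀ v, 0 < w v) (d : ℕ →₀ ℕ) :
    MvPowerSeries.coeff d (pProd (piW G w)) =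
      #{k ∈ profileColorings w d | ∀ u v, G.Reachable u v → k u = k v} := by
  have out_comp : ∀ k : V → ℕ, (∀ u v, G.Reachable u v → k u = k v) →
      (fun c : G.ConnectedComponent => k c.out) ∘ G.connectedComponentMk = k :=
    fun k hk => funext fun v => hk _ _ (ConnectedComponent.exact (G.connectedComponentMk v).out_eq)
  rw [pProd_piW, coeff_prod_psum (G.finsum_mem_supp_pos hw), Nat.cast_inj]
  refine Finset.card_nbij' (· ∘ G.connectedComponentMk) (fun k c => k c.out) ?_ ?_ ?_ ?_
  · intro κ hκ
    rw [coe_profileColorings (G.finsum_mem_supp_pos hw)] at hκ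
    rw [coe_filter, Set.mem_ofPred_eq, ← Finset.mem_coe, coe_profileColorings hw,
      Set.mem_ofPred_eq, colorProfile_comp_connectedComponentMk]
    exact ⟨hκ, fun u v huv => congrArg κ (ConnectedComponent.sound huv)⟩
  · intro k hk
    rw [coe_filter, Set.mem_ofPred_eq, ← Finset.mem_coe, coe_profileColorings hw] at hk
    rw [coe_profileColorings (G.finsum_mem_supp_pos hw), Set.mem_ofPred_eq,
      ← colorProfile_comp_connectedComponentMk, out_comp k hk.2]
    exact hk.1
  · intro κ _
    funext c
    exact congrArg κ c.out_eq
  · intro k hk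
    exact out_comp k (Finset.mem_filter.mp hk).2

end SimpleGraph

theorem SimpleGraph.reachable_fromEdgeSet_imp_eq_iff {V α : Type*} (A : Set (Sym2 V))
    (k : V → α) :
    (∀ u v, (fromEdgeSet A).Reachable u v → k u = k v) ↔ ∀ e ∈ A, (e.map k).IsDiag := by
  constructor
  · intro h e he
    induction e with
    | _ u v =>
      rw [Sym2.map_mk, Sym2.mk_isDiag_iff]
      obtain rfl | huv := eq_or_ne u v
      · rfl
      · exact h u v (Adj.reachable ((fromEdgeSet_adj A).mpr ⟨he, huv⟩))
  · rintro h u v ⟨p⟩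
    induction p with
    | nil => rfl
    | cons hadj _ ih => exact (Sym2.mk_isDiag_iff.mp (h _ hadj.1)).trans ih

theorem properCol_iff_forall_not_isDiag_map {V : Type*} (E : Set (Sym2 V)) (k : V → ℕ) :
    ProperCol E k ↔ ∀ e ∈ E, ¬ (e.map k).IsDiag := by
  constructor
  · intro h e he
    induction e with
    | _ u v => exact h u v he
  · exact fun h u v he => h _ he

theorem Finset.sum_powerset_neg_one_pow_card_mul_boole {α : Type*} [DecidableEq α]
    (E : Finset α) (P : α → Prop) [DecidablePred P] :
    ∑ A ∈ E.powerset, (-1 : ℤ) ^ #A * (if ∀ e ∈ A, P e then 1 else 0) =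
      if ∀ e ∈ E, ¬ P e then 1 else 0 := by
  have hfilter : {A ∈ E.powerset | ∀ e ∈ A, P e} = {e ∈ E | P e}.powerset := by
    ext A
    simp only [mem_filter, mem_powerset, subset_iff]
    grind
  simp only [mul_ite, mul_one, mul_zero]
  rw [← sum_filter, hfilter, sum_powerset_neg_one_pow_card]
  exact if_congr filter_eq_empty_iff rfl rfl

theorem MvPowerSeries.coeff_neg_one_pow_mul {σ R : Type*} [CommRing R] (n : ℕ)
    (F : MvPowerSeries σ R) (d : σ →₀ ℕ) :
    coeff d ((-1) ^ n * F) = (-1) ^ n * coeff d F := by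
  rw [← map_one C, ← map_neg, ← map_pow, coeff_C_mul]

/-- the weighted power-sum expansion
`X_{(G,w)} = Σ_{A ⊆ E} (-1)^(|A|) p_{π(G,w,A)}`. -/
theorem stmt6 {V : Type*} [Fintype V] (E : Finset (Sym2 V)) (w : V → Nat)
    (hw : ∀ v, 0 < w v) :
    csfW (E : Set (Sym2 V)) w = ∑ A ∈ E.powerset,
      (-1 : MvPowerSeries Nat Int) ^ A.card *
        pProd (piW (SimpleGraph.fromEdgeSet (A : Set (Sym2 V))) w) := by
  classical
  ext d
  calc MvPowerSeries.coeff d (csfW (E : Set (Sym2 V)) w)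
      = ∑ k ∈ profileColorings w d, if ∀ e ∈ E, ¬ (e.map k).IsDiag then 1 else 0 := by
        simp only [coeff_csfW _ hw, properCol_iff_forall_not_isDiag_map, mem_coe,
          natCast_card_filter]
    _ = ∑ k ∈ profileColorings w d, ∑ A ∈ E.powerset,
          (-1) ^ #A * if ∀ e ∈ A, (e.map k).IsDiag then 1 else 0 :=
        sum_congr rfl fun k _ => by
          convert (sum_powerset_neg_one_pow_card_mul_boole E fun e => (e.map k).IsDiag).symm
    _ = ∑ A ∈ E.powerset,
          (-1) ^ #A * (#{k ∈ profileColorings w d | ∀ e ∈ A, (e.map k).IsDiag} : ℤ) := by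
        simp only [sum_comm (s := profileColorings w d), natCast_card_filter, mul_sum]
    _ = _ := by
        simp only [map_sum, MvPowerSeries.coeff_neg_one_pow_mul,
          SimpleGraph.coeff_pProd_piW _ hw, SimpleGraph.reachable_fromEdgeSet_imp_eq_iff, mem_coe]
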